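/- arXiv:1507.08448 — 2 statements merged into one kernel-verified Lean document; each statement's English description precedes it below -/
import Mathlib

section
/- Define Lab(n,k) = 2^n · Σ_{p=1}^{k} S(n,p)·2^{−p}. Then for any fixed positive integer r, one has the two-sided bound (1/2)·Σ_{p=1}^{k−1} p^n/(p!·2^p) + k^n/(k!·2^k) ≤ Lab(n,k)/2^n ≤ Σ_{p=1}^{k} p^n/(p!·2^p) for all 1 ≤ k ≤ n. -/
/-- Stirling numbers of the second kind. -/
def stirling : ℕ → ℕ → ℕ
  | 0, 0 => 1
  | 0, _ + 1 => 0
  | _ + 1, 0 => 0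
  | n + 1, p + 1 => (p + 1) * stirling n (p + 1) + stirling n p


def T (n p : ℕ) : ℕ := p.factorial * stirling n p

lemma T_succ (n m : ℕ) : T (n+1) (m+1) = (m+1) * (T n (m+1) + T n m) := by
  simp only [T, stirling, Nat.factorial_succ]
  ring

lemma key (n p : ℕ) : ∑ j ∈ Finset.range (p+1), p.choose j * T n j = p ^ n := by
  induction n with
  | zero =>
    rw [Finset.sum_eq_single 0]
    · simp [T, stirling]
    · intro j hj hj0
      obtain ⟨m, rfl⟩ := Nat.exists_eq_succ_of_ne_zero hj0
      simp [T, stirling]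
    · simp
  | succ n ih =>
    rw [Finset.sum_range_succ']
    have h0 : p.choose 0 * T (n+1) 0 = 0 := by simp [T, stirling]
    rw [h0, add_zero]
    have hsplit : ∀ i, p.choose (i+1) * T (n+1) (i+1)
        = (i+1) * p.choose (i+1) * T n (i+1) + (i+1) * p.choose (i+1) * T n i := by
      intro i; rw [T_succ]; ring
    rw [Finset.sum_congr rfl fun i _ => hsplit i, Finset.sum_add_distrib]
    have h1 : ∑ i ∈ Finset.range p, (i+1) * p.choose (i+1) * T n (i+1)
        = ∑ j ∈ Finset.range (p+1), j * p.choose j * T n j := by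
      rw [Finset.sum_range_succ']
      simp
    have h2 : ∑ i ∈ Finset.range p, (i+1) * p.choose (i+1) * T n i
        = ∑ i ∈ Finset.range (p+1), (p - i) * p.choose i * T n i := by
      rw [Finset.sum_range_succ]
      simp only [Nat.sub_self, zero_mul, add_zero]
      refine Finset.sum_congr rfl fun i _ => ?_
      rw [mul_comm (i+1) (p.choose (i+1)), Nat.choose_succ_right_eq, mul_comm (p.choose i)]
    rw [h1, h2, ← Finset.sum_add_distrib, pow_succ, mul_comm (p^n) p, ← ih,
      Finset.mul_sum]
    refine Finset.sum_congr rfl fun j hj => ?_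
    have hjp : j ≤ p := Nat.lt_succ_iff.mp (Finset.mem_range.mp hj)
    have : j * p.choose j + (p - j) * p.choose j = p * p.choose j := by
      rw [← Nat.add_mul, Nat.add_sub_cancel' hjp]
    rw [← Nat.add_mul, ← Nat.add_mul, Nat.add_sub_cancel' hjp, mul_assoc]

lemma T_le (n p : ℕ) : T n p ≤ p ^ n := by
  calc T n p = p.choose p * T n p := by simp
  _ ≤ ∑ j ∈ Finset.range (p+1), p.choose j * T n j :=
      Finset.single_le_sum (f := fun j => p.choose j * T n j)
        (fun i _ => Nat.zero_le _) (Finset.self_mem_range_succ p)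
  _ = p ^ n := key n p

lemma le_T (n p : ℕ) (hp : 1 ≤ p) : p ^ n ≤ T n p + p * (p-1) ^ n := by
  obtain ⟨q, rfl⟩ := Nat.exists_eq_add_of_le hp
  rw [Nat.add_comm 1 q] at *
  have h1 : (q+1) ^ n = ∑ j ∈ Finset.range (q+2), (q+1).choose j * T n j := (key n (q+1)).symm
  rw [h1, Finset.sum_range_succ]
  simp only [Nat.choose_self, one_mul, Nat.add_sub_cancel]
  rw [Nat.add_comm]
  gcongr
  calc ∑ j ∈ Finset.range (q+1), (q+1).choose j * T n j
      ≤ ∑ j ∈ Finset.range (q+1), (q+1) * (q.choose j * T n j) := by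
        refine Finset.sum_le_sum fun j hj => ?_
        have hjq : j ≤ q := Nat.lt_succ_iff.mp (Finset.mem_range.mp hj)
        rw [← mul_assoc]
        gcongr
        have h := Nat.choose_mul_succ_eq q j
        have hpos : 1 ≤ q + 1 - j := by omega
        calc (q+1).choose j ≤ (q+1).choose j * (q+1-j) := Nat.le_mul_of_pos_right _ hpos
        _ = q.choose j * (q+1) := h.symm
        _ = (q+1) * q.choose j := Nat.mul_comm _ _
    _ = (q+1) * q ^ n := by rw [← Finset.mul_sum, key]

lemma T_le' (n p : ℕ) : p.factorial * stirling n p ≤ p ^ n := T_le n p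
lemma le_T' (n p : ℕ) (hp : 1 ≤ p) : p ^ n ≤ p.factorial * stirling n p + p * (p-1) ^ n := by
  have := le_T n p hp
  simpa [T] using this


lemma up_term (n p : ℕ) :
    (stirling n p : ℝ) / 2 ^ p ≤ (p : ℝ) ^ n / ((Nat.factorial p : ℝ) * 2 ^ p) := by
  have hT : ((Nat.factorial p : ℝ)) * (stirling n p : ℝ) ≤ (p : ℝ) ^ n := by
    exact_mod_cast Nat.cast_le.mpr (T_le' n p) |>.trans_eq (by push_cast; ring)
  have h1 : (0:ℝ) < (Nat.factorial p : ℝ) := by positivity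
  have h2 : (0:ℝ) < (2:ℝ) ^ p := by positivity
  rw [div_le_div_iff₀ h2 (by positivity)]
  nlinarith

lemma low_term (n i : ℕ) :
    ((i+1 : ℕ) : ℝ) ^ n / ((Nat.factorial (i+1) : ℝ) * 2 ^ (i+1))
      - (1/2) * ((i : ℝ) ^ n / ((Nat.factorial i : ℝ) * 2 ^ i))
    ≤ (stirling n (i+1) : ℝ) / 2 ^ (i+1) := by
  have h := le_T' n (i+1) (by omega)
  simp only [Nat.add_sub_cancel] at h
  have hc : ((i+1 : ℕ) : ℝ) ^ n
      ≤ (Nat.factorial (i+1) : ℝ) * (stirling n (i+1) : ℝ) + ((i:ℝ)+1) * (i:ℝ) ^ n := by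
    exact_mod_cast h
  have hfac : (Nat.factorial (i+1) : ℝ) = ((i:ℝ)+1) * (Nat.factorial i : ℝ) := by
    rw [Nat.factorial_succ]; push_cast; ring
  have h1 : (0:ℝ) < (Nat.factorial i : ℝ) := by positivity
  have h2 : (0:ℝ) < (2:ℝ) ^ i := by positivity
  have hD : (0:ℝ) < ((i:ℝ)+1) * (Nat.factorial i : ℝ) * 2 ^ (i+1) := by positivity
  have e1 : ((i+1 : ℕ) : ℝ) ^ n / (((i:ℝ)+1) * (Nat.factorial i : ℝ) * 2 ^ (i+1))
      - (1/2) * ((i : ℝ) ^ n / ((Nat.factorial i : ℝ) * 2 ^ i))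
      = (((i+1 : ℕ) : ℝ) ^ n - ((i:ℝ)+1) * (i:ℝ) ^ n)
        / (((i:ℝ)+1) * (Nat.factorial i : ℝ) * 2 ^ (i+1)) := by
    rw [pow_succ]
    field_simp
  have e2 : (stirling n (i+1) : ℝ) / 2 ^ (i+1)
      = (((i:ℝ)+1) * (Nat.factorial i : ℝ) * (stirling n (i+1) : ℝ))
        / (((i:ℝ)+1) * (Nat.factorial i : ℝ) * 2 ^ (i+1)) := by
    exact (mul_div_mul_left _ _ (by positivity)).symm
  rw [hfac] at hc ⊢
  rw [e1, e2, div_le_div_iff_of_pos_right hD]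
  linarith

/-- Two-sided bound for `Lab(n,k)/2^n = Σ_{p=1}^{k} S(n,p)·2^{−p}`:
`(1/2)·Σ_{p=1}^{k−1} p^n/(p!·2^p) + k^n/(k!·2^k) ≤ Σ_{p=1}^{k} S(n,p)·2^{−p}
  ≤ Σ_{p=1}^{k} p^n/(p!·2^p)` for all `1 ≤ k ≤ n`. -/
theorem stmt10 (n k : ℕ) (hk : 1 ≤ k) (hkn : k ≤ n) :
    (1 / 2 : ℝ) * ∑ p ∈ Finset.Icc 1 (k - 1),
          (p : ℝ) ^ n / ((Nat.factorial p : ℝ) * 2 ^ p)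
        + (k : ℝ) ^ n / ((Nat.factorial k : ℝ) * 2 ^ k)
      ≤ ∑ p ∈ Finset.Icc 1 k, (stirling n p : ℝ) / 2 ^ p ∧
    ∑ p ∈ Finset.Icc 1 k, (stirling n p : ℝ) / 2 ^ p
      ≤ ∑ p ∈ Finset.Icc 1 k, (p : ℝ) ^ n / ((Nat.factorial p : ℝ) * 2 ^ p) := by
  constructor
  · -- lower bound
    obtain ⟨m, rfl⟩ : ∃ m, k = m + 1 := ⟨k - 1, by omega⟩
    set F : ℕ → ℝ := fun p => (p : ℝ) ^ n / ((Nat.factorial p : ℝ) * 2 ^ p) with hF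
    have hIcc1 : ∑ p ∈ Finset.Icc 1 (m+1), (stirling n p : ℝ) / 2 ^ p
        = ∑ i ∈ Finset.range (m+1), (stirling n (1+i) : ℝ) / 2 ^ (1+i) := by
      rw [← Finset.Ico_add_one_right_eq_Icc, Finset.sum_Ico_eq_sum_range]
      simp
    have hIcc2 : ∑ p ∈ Finset.Icc 1 (m+1-1), F p = ∑ i ∈ Finset.range m, F (1+i) := by
      rw [← Finset.Ico_add_one_right_eq_Icc, Finset.sum_Ico_eq_sum_range]
      simp
    rw [hIcc1, hIcc2]
    have hstep : ∑ i ∈ Finset.range (m+1), (F (i+1) - (1/2) * F i)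
        ≤ ∑ i ∈ Finset.range (m+1), (stirling n (1+i) : ℝ) / 2 ^ (1+i) := by
      refine Finset.sum_le_sum fun i _ => ?_
      rw [add_comm 1 i]
      exact low_term n i
    refine le_trans ?_ hstep
    rw [Finset.sum_sub_distrib, Finset.sum_range_succ, Finset.sum_range_succ']
    have hF0 : F 0 = 0 := by
      simp only [hF]
      norm_num [zero_pow (show n ≠ 0 by omega)]
    rw [hF0]
    have hFk : ((m+1 : ℕ) : ℝ) ^ n / ((Nat.factorial (m+1) : ℝ) * 2 ^ (m+1)) = F (m+1) := rfl
    rw [hFk]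
    have hcomm : ∀ i, F (1+i) = F (i+1) := fun i => by rw [add_comm]
    simp only [hcomm]
    have hhalf : ∑ i ∈ Finset.range m, 1/2 * F (i+1) = 1/2 * ∑ i ∈ Finset.range m, F (i+1) :=
      (Finset.mul_sum _ _ _).symm
    rw [hhalf]
    linarith
  · exact Finset.sum_le_sum fun p _ => up_term n p
end

section
/- With a_p^{(n)} = p^n/(p!·2^p) and M_n the mode, suppose u_n ≤ M_n, δ_n = o(u_n) and u_n·√(ln u_n)/√n = o(δ_n). Then a_{u_n−δ_n}^{(n)}/a_{u_n}^{(n)} ≤ exp(−n·δ_n²/(2u_n²)·(1+o(1))), and in particular u_n · a_{u_n−δ_n}^{(n)}/a_{u_n}^{(n)} → 0 as n → ∞. -/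
/-!
Write `x = δ/u`. Then `a_{u-δ}/a_u = (1 - x)^n · u!/(u-δ)! · 2^δ ≤ (1 - x)^n (2u)^δ`, and
`log (1 - x) ≤ -x - x²/2` bounds this by `exp (-n x - n x²/2 + δ log (2u))`. Since `a_{M-1} ≤ a_M`
at the mode, `(M - 1) log (2M) ≤ n`, hence also `(u - 1) log (2u) ≤ n` for `u ≤ M`; this absorbs
`δ log (2u)` into `n x` up to `δ log (2u)/u`, an error of relative size
`2 (δ/u) · u² log (2u)/(n δ²) = o(1)`. The hypothesis on `δ` says precisely that
`n δ²/u² ≫ log u`, so the bound is `o(1/u²)`.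
-/

open Filter Asymptotics

/-- The sequence `a_p^{(n)} = p^n / (p! · 2^p)`. -/
noncomputable def a (n p : ℕ) : ℝ := (p : ℝ) ^ n / ((Nat.factorial p : ℝ) * 2 ^ p)

open Real

lemma log_one_sub_le {x : ℝ} (h₀ : 0 ≤ x) (h₁ : x < 1) : log (1 - x) ≤ -x - x ^ 2 / 2 := by
  have h := sum_le_hasSum (Finset.range 2) (fun i _ ↦ by positivity)
    (hasSum_pow_div_log_of_abs_lt_one (by rwa [abs_of_nonneg h₀]))
  norm_num [Finset.sum_range_succ] at h
  linarith

lemma a_pos (n : ℕ) {p : ℕ} (hp : 0 < p) : 0 < a n p := by unfold a; positivity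

lemma a_nonneg (n p : ℕ) : 0 ≤ a n p := by unfold a; positivity

lemma a_sub_div_a_eq {n u δ : ℕ} (hδ : δ ≤ u) (hu : 0 < u) :
    a n (u - δ) / a n u = (1 - δ / u) ^ n * (u.descFactorial δ * 2 ^ δ) := by
  have hfact : ((u - δ).factorial : ℝ) * u.descFactorial δ = u.factorial := by
    exact_mod_cast Nat.factorial_mul_descFactorial hδ
  have hpow : (2 : ℝ) ^ (u - δ) * 2 ^ δ = 2 ^ u := by rw [← pow_add, Nat.sub_add_cancel hδ]
  unfold a
  rw [← hfact, ← hpow, Nat.cast_sub hδ, one_sub_div (by positivity), div_pow]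
  field_simp

lemma a_sub_div_a_le_exp_log {n u δ : ℕ} (hδ : δ < u) :
    a n (u - δ) / a n u ≤ exp (n * log (1 - δ / u) + δ * log (2 * u)) := by
  have hu : (0 : ℝ) < u := by exact_mod_cast (Nat.zero_le δ).trans_lt hδ
  have hx : (0 : ℝ) < 1 - δ / u := by
    rw [sub_pos, div_lt_one hu]; exact_mod_cast hδ
  rw [a_sub_div_a_eq hδ.le (by exact_mod_cast hu), exp_add, exp_nat_mul, exp_log hx,
    exp_nat_mul, exp_log (by positivity), mul_comm 2 (u : ℝ), mul_pow]
  gcongr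
  exact_mod_cast Nat.descFactorial_le_pow u δ

lemma sub_one_mul_log_le_of_a_le {n m : ℕ} (hm : 2 ≤ m) (h : a n (m - 1) ≤ a n m) :
    ((m : ℝ) - 1) * log (2 * m) ≤ n := by
  have hm1 : (0 : ℝ) < m - 1 := by
    rw [sub_pos]; exact_mod_cast hm
  have hx : 0 < 1 - 1 / (m : ℝ) := by rw [sub_pos, div_lt_one (by positivity)]; linarith
  have hratio : (1 - 1 / (m : ℝ)) ^ n * (2 * m) ≤ 1 := by
    have := (div_le_one (a_pos n (by omega))).mpr h
    rw [a_sub_div_a_eq (by omega) (by omega)] at this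
    simpa [mul_comm] using this
  have hlog : log (2 * m) ≤ n * -log (1 - 1 / m) := by
    have := log_le_log (by positivity) hratio
    rw [log_mul (by positivity) (by positivity), log_pow, log_one] at this
    linarith
  have hlog_le : -log (1 - 1 / (m : ℝ)) ≤ 1 / (m - 1) := by
    have := one_sub_inv_le_log_of_pos hx
    have e : 1 - (1 - 1 / (m : ℝ))⁻¹ = -(1 / (m - 1)) := by
      field_simp
      ring
    linarith
  calc ((m : ℝ) - 1) * log (2 * m) ≤ (m - 1) * (n * (1 / (m - 1))) := by
        gcongr
        exact hlog.trans (mul_le_mul_of_nonneg_left hlog_le n.cast_nonneg)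
    _ = n := by field_simp

lemma sub_one_mul_log_le_of_le_of_a_le {n u m : ℕ} (hu : 2 ≤ u) (hum : u ≤ m)
    (h : a n (m - 1) ≤ a n m) : ((u : ℝ) - 1) * log (2 * u) ≤ n := by
  have hu' : (2 : ℝ) ≤ u := by exact_mod_cast hu
  have hum' : (u : ℝ) ≤ m := by exact_mod_cast hum
  calc ((u : ℝ) - 1) * log (2 * u) ≤ (m - 1) * log (2 * m) :=
        mul_le_mul (by linarith) (log_le_log (by positivity) (by linarith))
          (log_nonneg (by linarith)) (by linarith)
    _ ≤ n := sub_one_mul_log_le_of_a_le (hu.trans hum) h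

lemma a_sub_div_a_le_exp {n u δ : ℕ} (hδ : δ < u) (hmode : ((u : ℝ) - 1) * log (2 * u) ≤ n) :
    a n (u - δ) / a n u ≤ exp (-(n * δ ^ 2 / (2 * u ^ 2)) + δ * log (2 * u) / u) := by
  have hu : (0 : ℝ) < u := by exact_mod_cast (Nat.zero_le δ).trans_lt hδ
  have hδu : (δ : ℝ) / u < 1 := by rw [div_lt_one hu]; exact_mod_cast hδ
  refine (a_sub_div_a_le_exp_log hδ).trans (exp_le_exp.mpr ?_)
  have hlog := log_one_sub_le (by positivity) hδu
  have hlin : δ * log (2 * u) - n * (δ / u) ≤ δ * log (2 * u) / u := by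
    have := mul_le_mul_of_nonneg_left hmode (by positivity : (0 : ℝ) ≤ δ / u)
    field_simp at this ⊢
    linarith
  have hnlog : (n : ℝ) * log (1 - δ / u) ≤ n * (-(δ / u) - (δ / u) ^ 2 / 2) :=
    mul_le_mul_of_nonneg_left hlog n.cast_nonneg
  have hquad : (n : ℝ) * (δ / u) ^ 2 / 2 = n * δ ^ 2 / (2 * u ^ 2) := by field_simp
  linarith

section

variable {α : Type*} {l : Filter α}

lemma eventually_lt_of_isLittleO {f g : α → ℕ} (h : (fun x ↦ (f x : ℝ)) =o[l] fun x ↦ (g x : ℝ))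
    (hg : Tendsto g l atTop) : ∀ᶠ x in l, f x < g x := by
  filter_upwards [h.bound one_half_pos, hg.eventually_gt_atTop 0] with x hx hgx
  have : (0 : ℝ) < g x := by exact_mod_cast hgx
  simp only [norm_natCast] at hx
  exact_mod_cast (by linarith : (f x : ℝ) < g x)

end

section

variable {u δ : ℕ → ℕ}

lemma isLittleO_sq_mul_log_div
    (h : (fun n ↦ (u n : ℝ) * √(log (u n)) / √n) =o[atTop] fun n ↦ (δ n : ℝ)) :
    (fun n ↦ (u n : ℝ) ^ 2 * log (u n) / n) =o[atTop] fun n ↦ (δ n : ℝ) ^ 2 := by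
  refine (h.pow two_pos).congr_left fun n ↦ ?_
  rw [div_pow, mul_pow, sq_sqrt (log_natCast_nonneg _), sq_sqrt n.cast_nonneg]

lemma tendsto_error_zero (hu : Tendsto u atTop atTop)
    (hδ : (fun n ↦ (δ n : ℝ)) =o[atTop] fun n ↦ (u n : ℝ))
    (h : (fun n ↦ (u n : ℝ) ^ 2 * log (u n) / n) =o[atTop] fun n ↦ (δ n : ℝ) ^ 2) :
    Tendsto (fun n ↦ -2 * (δ n / u n) * ((u n : ℝ) ^ 2 * log (2 * u n) / n / δ n ^ 2))
      atTop (nhds 0) := by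
  have hlog : (fun n ↦ (u n : ℝ) ^ 2 * log (2 * u n) / n) =O[atTop]
      fun n ↦ (u n : ℝ) ^ 2 * log (u n) / n := by
    refine IsBigO.of_bound 2 ?_
    filter_upwards [hu.eventually_ge_atTop 2] with n hn
    have hn' : (2 : ℝ) ≤ u n := by exact_mod_cast hn
    have hlog2 : log 2 ≤ log (u n) := log_le_log two_pos hn'
    have hlog2u : 0 ≤ log (2 * u n) := log_nonneg (by linarith)
    rw [Real.norm_of_nonneg (by positivity), Real.norm_of_nonneg (by positivity),
      log_mul two_ne_zero (by positivity), ← mul_div_assoc]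
    gcongr ?_ / _
    nlinarith [sq_nonneg (u n : ℝ)]
  simpa using (hδ.tendsto_div_nhds_zero.const_mul (-2)).mul
    (hlog.trans_isLittleO h).tendsto_div_nhds_zero

lemma tendsto_mul_exp_neg_zero {ε : ℕ → ℝ} (hu : Tendsto u atTop atTop)
    (hε : Tendsto ε atTop (nhds 0))
    (h : (fun n ↦ (u n : ℝ) ^ 2 * log (u n) / n) =o[atTop] fun n ↦ (δ n : ℝ) ^ 2) :
    Tendsto (fun n ↦ u n * exp (-(n : ℝ) * δ n ^ 2 / (2 * u n ^ 2) * (1 + ε n)))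
      atTop (nhds 0) := by
  refine squeeze_zero' (Eventually.of_forall fun n ↦ by positivity) ?_
    (tendsto_inv_atTop_zero.comp (tendsto_natCast_atTop_atTop.comp hu))
  filter_upwards [h.bound (by norm_num : (0 : ℝ) < 1 / 8),
    hε.eventually (eventually_ge_nhds (by norm_num : (-1 / 2 : ℝ) < 0)),
    hu.eventually_ge_atTop 1, eventually_ge_atTop 1] with n hbound hεn hun hn
  have hU : (0 : ℝ) < u n := by exact_mod_cast hun
  have hL : 0 ≤ log (u n) := log_natCast_nonneg _
  rw [Real.norm_of_nonneg (by positivity), Real.norm_of_nonneg (by positivity),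
    div_le_iff₀ (by exact_mod_cast hn)] at hbound
  have hA : 4 * log (u n) ≤ n * δ n ^ 2 / (2 * u n ^ 2) := by
    rw [le_div_iff₀ (by positivity)]
    linarith
  have hexp : -(n : ℝ) * δ n ^ 2 / (2 * u n ^ 2) * (1 + ε n) ≤ -(2 * log (u n)) := by
    rw [neg_mul, neg_div, neg_mul, neg_le_neg_iff]
    nlinarith
  calc (u n : ℝ) * exp (-(n : ℝ) * δ n ^ 2 / (2 * u n ^ 2) * (1 + ε n))
      ≤ u n * exp (-(2 * log (u n))) := by gcongr
    _ = (u n : ℝ)⁻¹ := by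
      rw [exp_neg, two_mul, exp_add, exp_log hU]
      field_simp

end

theorem stmt12_general (u δ M : ℕ → ℕ)
    (hu' : Tendsto u atTop atTop)
    (hM : ∀ n ≥ 1, 1 ≤ M n ∧ M n ≤ n ∧ ∀ p, 1 ≤ p → p ≤ n → a n p ≤ a n (M n))
    (huM : ∀ᶠ n in atTop, u n ≤ M n)
    (hδ : (fun n => (δ n : ℝ)) =o[atTop] fun n => (u n : ℝ))
    (hδ' : (fun n => (u n : ℝ) * Real.sqrt (Real.log (u n)) / Real.sqrt n)
      =o[atTop] fun n => (δ n : ℝ)) :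
    (∃ ε : ℕ → ℝ, Tendsto ε atTop (nhds 0) ∧ ∀ᶠ n in atTop,
        a n (u n - δ n) / a n (u n) ≤
          Real.exp (-(n : ℝ) * (δ n : ℝ) ^ 2 / (2 * (u n : ℝ) ^ 2) * (1 + ε n))) ∧
      Tendsto (fun n => (u n : ℝ) * (a n (u n - δ n) / a n (u n))) atTop (nhds 0) := by
  have hsq := isLittleO_sq_mul_log_div hδ'
  let ε : ℕ → ℝ := fun n ↦ -2 * (δ n / u n) * ((u n : ℝ) ^ 2 * log (2 * u n) / n / δ n ^ 2)
  have hbound : ∀ᶠ n in atTop, a n (u n - δ n) / a n (u n) ≤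
      exp (-(n : ℝ) * δ n ^ 2 / (2 * u n ^ 2) * (1 + ε n)) := by
    filter_upwards [eventually_lt_of_isLittleO hδ hu', hu'.eventually_ge_atTop 2, huM,
      eventually_ge_atTop 1] with n hδu hu2 huMn hn
    obtain ⟨-, hMn, hmax⟩ := hM n hn
    have hmode := sub_one_mul_log_le_of_le_of_a_le hu2 huMn (hmax _ (by omega) (by omega))
    convert a_sub_div_a_le_exp hδu hmode using 2
    have hu0 : (u n : ℝ) ≠ 0 := by positivity
    rcases eq_or_ne (δ n : ℝ) 0 with hδ0 | hδ0
    · simp [ε, hδ0]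
    · simp only [ε]
      field_simp
      ring
  have hε : Tendsto ε atTop (nhds 0) := tendsto_error_zero hu' hδ hsq
  refine ⟨⟨ε, hε, hbound⟩, squeeze_zero' (Eventually.of_forall fun n ↦ ?_) ?_
    (tendsto_mul_exp_neg_zero hu' hε hsq)⟩
  · exact mul_nonneg (u n).cast_nonneg (div_nonneg (a_nonneg _ _) (a_nonneg _ _))
  · filter_upwards [hbound] with n hn
    exact mul_le_mul_of_nonneg_left hn (u n).cast_nonneg

/-- If `u_n ≤ M_n` (the mode of `p ↦ a_p^{(n)}`), `δ_n = o(u_n)` and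
`u_n √(ln u_n)/√n = o(δ_n)`, then
`a_{u_n−δ_n}^{(n)} / a_{u_n}^{(n)} ≤ exp(−n δ_n²/(2u_n²)·(1+o(1)))`,
and in particular `u_n · a_{u_n−δ_n}^{(n)} / a_{u_n}^{(n)} → 0`. -/
theorem stmt12 (u δ M : ℕ → ℕ)
    (hu : Monotone u) (hun : ∀ n, u n ≤ n) (hu' : Tendsto u atTop atTop)
    (hM : ∀ n ≥ 1, 1 ≤ M n ∧ M n ≤ n ∧ ∀ p, 1 ≤ p → p ≤ n → a n p ≤ a n (M n))
    (huM : ∀ᶠ n in atTop, u n ≤ M n)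
    (hδ : (fun n => (δ n : ℝ)) =o[atTop] fun n => (u n : ℝ))
    (hδ' : (fun n => (u n : ℝ) * Real.sqrt (Real.log (u n)) / Real.sqrt n)
      =o[atTop] fun n => (δ n : ℝ)) :
    (∃ ε : ℕ → ℝ, Tendsto ε atTop (nhds 0) ∧ ∀ᶠ n in atTop,
        a n (u n - δ n) / a n (u n) ≤
          Real.exp (-(n : ℝ) * (δ n : ℝ) ^ 2 / (2 * (u n : ℝ) ^ 2) * (1 + ε n))) ∧
      Tendsto (fun n => (u n : ℝ) * (a n (u n - δ n) / a n (u n))) atTop (nhds 0) :=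
  stmt12_general u δ M hu' hM huM hδ hδ'
end
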